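/- arXiv:0804.0470 — 3 statements merged into one kernel-verified Lean document; each statement's English description precedes it below -/
import Mathlib

section
/- Let d ≥ 1, γ ≥ 0, k ≥ 1 be integers, and set n_G = 2(d + γ - 1). Suppose G is a map of degree d that omits r₀ values with total branching order n₀ over those values (so k ≥ d·r₀ - n₀), and has totally ramified values b₁,...,b_{l₀} with minimal multiplicities ν₁,...,ν_{l₀} ≥ 2 and total branching order n_r over them (so d·l₀ - n_r ≤ Σᵢ d/νᵢ), with n₀ + n_r ≤ n_G. Then r₀ + Σᵢ (1 - 1/νᵢ) ≤ (n_G + k)/d = 2 + 2(γ - 1 + k/2)/d. -/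
open Finset

-- Also valid where `ν i = 0`: then `1 / ν i` and `d / ν i` are both the junk value `0`.
lemma mul_sum_one_sub_one_div {ι K : Type*} [Field K] (s : Finset ι) (d : K) (ν : ι → K) :
    d * ∑ i ∈ s, (1 - 1 / ν i) = d * #s - ∑ i ∈ s, d / ν i := by
  simp only [mul_sum, mul_sub, mul_one, mul_one_div, sum_sub_distrib, sum_const, nsmul_eq_mul]

lemma add_sum_one_sub_one_div_le {ι K : Type*} [Field K] [LinearOrder K] [IsStrictOrderedRing K]
    (s : Finset ι) {d k r₀ n₀ n_r nG : K} (ν : ι → K) (hd : 0 < d)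
    (hexc : d * r₀ - n₀ ≤ k) (hram : d * #s - n_r ≤ ∑ i ∈ s, d / ν i)
    (htot : n₀ + n_r ≤ nG) :
    r₀ + ∑ i ∈ s, (1 - 1 / ν i) ≤ (nG + k) / d := by
  rw [le_div_iff₀ hd, add_mul, mul_comm _ d, mul_comm _ d, mul_sum_one_sub_one_div]
  linarith

lemma add_div_eq_of_eq_two_mul {K : Type*} [Field K] [NeZero (2 : K)] {d γ k nG : K} (hd : d ≠ 0)
    (hnG : nG = 2 * (d + γ - 1)) :
    (nG + k) / d = 2 + 2 * (γ - 1 + k / 2) / d := by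
  rw [hnG]
  field_simp
  ring

theorem stmt_2_general (d γ k : ℤ) (hd : 1 ≤ d)
    (r₀ n₀ : ℤ)
    (l₀ : ℕ) (ν : Fin l₀ → ℤ)
    (n_r : ℤ)
    (nG : ℤ) (hnG : nG = 2 * (d + γ - 1))
    (hexc : k ≥ d * r₀ - n₀)
    (hram : (d : ℝ) * l₀ - n_r ≤ ∑ i, (d : ℝ) / (ν i))
    (htot : n₀ + n_r ≤ nG) :
    (r₀ : ℝ) + ∑ i, (1 - 1 / (ν i : ℝ)) ≤ ((nG : ℝ) + k) / d ∧
      ((nG : ℝ) + k) / d = 2 + 2 * ((γ : ℝ) - 1 + (k : ℝ) / 2) / d := by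
  have hd₀ : (0 : ℝ) < d := by exact_mod_cast hd
  have hexc' : (d : ℝ) * r₀ - n₀ ≤ k := by exact_mod_cast hexc
  have htot' : (n₀ : ℝ) + n_r ≤ nG := by exact_mod_cast htot
  have hram' : (d : ℝ) * #(univ : Finset (Fin l₀)) - n_r ≤ ∑ i, (d : ℝ) / ν i := by
    simpa only [card_univ, Fintype.card_fin] using hram
  exact ⟨add_sum_one_sub_one_div_le univ (fun i ↦ (ν i : ℝ)) hd₀ hexc' hram' htot',
    add_div_eq_of_eq_two_mul hd₀.ne' (by exact_mod_cast hnG)⟩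

/-- Core counting argument for the main ramification estimate (Theorem 2.3):
with `n_G = 2(d + γ - 1)` the total branching order, `r₀` omitted values with
branching `n₀` over them (so `k ≥ d r₀ - n₀`), totally ramified values with
minimal multiplicities `νᵢ ≥ 2` and branching `n_r` over them (so
`d l₀ - n_r ≤ Σ d/νᵢ`), and `n₀ + n_r ≤ n_G`, one gets
`r₀ + Σ (1 - 1/νᵢ) ≤ (n_G + k)/d = 2 + 2(γ - 1 + k/2)/d`. -/
theorem stmt_2 (d γ k : ℤ) (hd : 1 ≤ d) (hγ : 0 ≤ γ) (hk : 1 ≤ k)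
    (r₀ n₀ : ℤ) (hr₀ : 0 ≤ r₀) (hn₀ : 0 ≤ n₀)
    (l₀ : ℕ) (ν : Fin l₀ → ℤ) (hν : ∀ i, 2 ≤ ν i)
    (n_r : ℤ) (hnr : 0 ≤ n_r)
    (nG : ℤ) (hnG : nG = 2 * (d + γ - 1))
    (hexc : k ≥ d * r₀ - n₀)
    (hram : (d : ℝ) * l₀ - n_r ≤ ∑ i, (d : ℝ) / (ν i))
    (htot : n₀ + n_r ≤ nG) :
    (r₀ : ℝ) + ∑ i, (1 - 1 / (ν i : ℝ)) ≤ ((nG : ℝ) + k) / d ∧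
      ((nG : ℝ) + k) / d = 2 + 2 * ((γ : ℝ) - 1 + (k : ℝ) / 2) / d :=
  stmt_2_general d γ k hd r₀ n₀ l₀ ν n_r nG hnG hexc hram htot
end

section
/- Let γ = 0, and let d, k ≥ 1 and integers μ₁,...,μₖ ≥ 2 satisfy 2d - Σⱼ μⱼ = -2. Then (γ - 1 + k/2)/d ≥ 1/2, i.e. k - 2 ≥ d, is impossible, since it would give k ≤ (1/2)Σⱼ μⱼ ≤ γ - 1 + k = k - 1. Hence for genus 0 algebraic CMC-1 surfaces D_G ≥ 3 is impossible, i.e. D_G ≤ 2. -/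
/-- Corollary 2.6(ii), genus 0: if `2d - Σ μⱼ = -2` with each `μⱼ ≥ 2`, then
`k - 2 ≥ d` is impossible; hence for genus-0 algebraic CMC-1 surfaces `D_G ≥ 3`
cannot occur. -/
theorem stmt_5 (d : ℤ) (k : ℕ) (hd : 1 ≤ d) (hk : 1 ≤ k)
    (μ : Fin k → ℤ) (hμ : ∀ j, 2 ≤ μ j)
    (hRR : 2 * d - (∑ j, μ j) = -2) :
    ¬ ((k : ℤ) - 2 ≥ d) := by
  intro h
  have hsum : (k : ℤ) * 2 ≤ ∑ j, μ j := by
    calc (k : ℤ) * 2 = ∑ _j : Fin k, (2 : ℤ) := by simp [mul_comm]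
    _ ≤ ∑ j, μ j := Finset.sum_le_sum fun j _ => hμ j
  omega
end

section
/- Let F : U → SL(2, ℂ) be a holomorphic solution of F⁻¹ F' = ((g, -g²),(1, -g)) ŵ on a connected open set U, with g, ŵ holomorphic and ŵ not identically zero. If the hyperbolic Gauss map G = F₁₁'/F₂₁' is a constant c, then there exist constants C₁, C₂ ∈ ℂ with F₁₁ = c F₂₁ + C₁ and F₁₂ = c F₂₂ + C₂, and the secondary Gauss map g equals the constant -C₂/C₁ (so the surface is flat). -/
/-! If `G = F₁₁'/F₂₁'` is the constant `c`, then `F₁₁ - c F₂₁` and `F₁₂ - c F₂₂` have vanishing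
derivative, hence are constants `C₁`, `C₂` on the connected set `U`. Substituting into the
structure equation `F₁₁' = c F₂₁'` and dividing by `ŵ` gives `C₁ g + C₂ = 0`; and `C₁ ≠ 0`, since
otherwise `C₂ = 0` and the determinant of `F` would vanish. -/

theorem IsOpen.exists_eq_const_mul_add_of_deriv_eq {𝕜 : Type*} [RCLike 𝕜] {s : Set 𝕜}
    (hs : IsOpen s) (hs' : IsPreconnected s) {f h : 𝕜 → 𝕜} (c : 𝕜)
    (hf : DifferentiableOn 𝕜 f s) (hh : DifferentiableOn 𝕜 h s)
    (hfh : ∀ z ∈ s, deriv f z = c * deriv h z) : ∃ C, ∀ z ∈ s, f z = c * h z + C := by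
  refine hs.exists_eq_add_of_deriv_eq hs' hf (hh.const_mul c) fun z hz ↦ ?_
  rw [hfh z hz, deriv_const_mul c ((hh z hz).differentiableAt (hs.mem_nhds hz))]

/-- Flatness argument in Yu's theorem: if `F` solves the structure equation
`F⁻¹ dF = ((g, -g²),(1, -g)) ω` on a connected open set `U` with `ω` nowhere
zero, and the hyperbolic Gauss map `G = F₁₁'/F₂₁'` is a constant `c`, then
`F₁₁ = c F₂₁ + C₁`, `F₁₂ = c F₂₂ + C₂` for constants `C₁, C₂`, and the
secondary Gauss map `g` is the constant `-C₂/C₁`. -/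
theorem stmt_12 (U : Set ℂ) (hU : IsOpen U) (hUc : IsPreconnected U)
    (hUne : U.Nonempty)
    (F₁₁ F₁₂ F₂₁ F₂₂ g w : ℂ → ℂ) (c : ℂ)
    (hw : ∀ z ∈ U, w z ≠ 0)
    (hdet : ∀ z ∈ U, F₁₁ z * F₂₂ z - F₁₂ z * F₂₁ z = 1)
    (h11 : ∀ z ∈ U, HasDerivAt F₁₁ ((F₁₁ z * g z + F₁₂ z) * w z) z)
    (h12 : ∀ z ∈ U, HasDerivAt F₁₂ (-(g z) * (F₁₁ z * g z + F₁₂ z) * w z) z)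
    (h21 : ∀ z ∈ U, HasDerivAt F₂₁ ((F₂₁ z * g z + F₂₂ z) * w z) z)
    (h22 : ∀ z ∈ U, HasDerivAt F₂₂ (-(g z) * (F₂₁ z * g z + F₂₂ z) * w z) z)
    (hG : ∀ z ∈ U, deriv F₁₁ z = c * deriv F₂₁ z ∧
                    deriv F₁₂ z = c * deriv F₂₂ z) :
    ∃ C₁ C₂ : ℂ, C₁ ≠ 0 ∧
      (∀ z ∈ U, F₁₁ z = c * F₂₁ z + C₁) ∧
      (∀ z ∈ U, F₁₂ z = c * F₂₂ z + C₂) ∧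
      (∀ z ∈ U, g z = -C₂ / C₁) := by
  have diff {F : ℂ → ℂ} {F' : ℂ → ℂ} (hF : ∀ z ∈ U, HasDerivAt F (F' z) z) :
      DifferentiableOn ℂ F U := fun z hz ↦ (hF z hz).differentiableAt.differentiableWithinAt
  obtain ⟨C₁, hC₁⟩ := hU.exists_eq_const_mul_add_of_deriv_eq hUc c (diff h11) (diff h21)
    fun z hz ↦ (hG z hz).1
  obtain ⟨C₂, hC₂⟩ := hU.exists_eq_const_mul_add_of_deriv_eq hUc c (diff h12) (diff h22)
    fun z hz ↦ (hG z hz).2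
  have hg : ∀ z ∈ U, C₁ * g z + C₂ = 0 := fun z hz ↦ by
    have hG₁ := (hG z hz).1
    rw [(h11 z hz).deriv, (h21 z hz).deriv, hC₁ z hz, hC₂ z hz] at hG₁
    exact (mul_eq_zero.mp (by linear_combination hG₁)).resolve_right (hw z hz)
  have hC₁ne : C₁ ≠ 0 := by
    obtain ⟨z₀, hz₀⟩ := hUne
    rintro rfl
    have hC₂0 : C₂ = 0 := by simpa using hg z₀ hz₀
    have hdet₀ := hdet z₀ hz₀
    rw [hC₁ z₀ hz₀, hC₂ z₀ hz₀, hC₂0] at hdet₀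
    exact zero_ne_one (by linear_combination hdet₀)
  refine ⟨C₁, C₂, hC₁ne, hC₁, hC₂, fun z hz ↦ ?_⟩
  rw [eq_div_iff hC₁ne]
  linear_combination hg z hz
end
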